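/- (Pathwise regret recursion for C-UCBVI.) For every realization of the interaction of C-UCBVI with the causal episodic MDP, every episode k ∈ {1,…,K}, and every step h ∈ {1,…,H}: δ̃_{k,h} ≤ δ̃_{k,h+1} + ε_{k,h} + b̄_{k,h} + [ (P̂_{k,h}^{π_k} − ℙ_h^{π_k}) V_{h+1}^* ](s_{k,h}) + [ (P̂_{k,h}^{π_k} − ℙ_h^{π_k}) (V_{k,h+1} − V_{h+1}^*) ](s_{k,h}), where δ̃_{k,h} := V_{k,h}(s_{k,h}) − V_h^{π_k}(s_{k,h}) with δ̃_{k,H+1} := 0, ε_{k,h} := Σ_y ℙ(y|s_{k,h},π_k(s_{k,h},h))(V_{k,h+1}(y) − V_{h+1}^{π_k}(y)) − (V_{k,h+1}(s_{k,h+1}) − V_{h+1}^{π_k}(s_{k,h+1})), b̄_{k,h} := Σ_z b_{k,h}(s_{k,h},z) P(z|s_{k,h},π_k(s_{k,h},h)), P̂_{k,h}^{π_k}(y|s) := Σ_z P̂_k(y|s,z)P(z|s,π_k(s,h)), ℙ_h^{π_k}(y|s) := ℙ(y|s,π_k(s,h)), and for a function f on 𝒮, [(P̂ − ℙ) f](s)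 := Σ_y (P̂(y|s) − ℙ(y|s)) f(y). -/

import Mathlib

open scoped Classical BigOperators

noncomputable section

/-- A causal episodic MDP: finite state, action and parent-variable sets, horizon `H`,
transitions `ℙ(·|s,z)`, known parent-conditionals `P(·|s,a)` and known rewards `R(s,z) ∈ [0,1]`. -/
structure CMDP (S A Z : Type) [Fintype S] [Fintype A] [Fintype Z] : Type where
  H : ℕ
  H_pos : 1 ≤ H
  Ptrans : S → Z → S → ℝ
  Ptrans_nonneg : ∀ s z y, 0 ≤ Ptrans s z y
  Ptrans_sum_one : ∀ s z, ∑ y, Ptrans s z y = 1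
  Pz : S → A → Z → ℝ
  Pz_nonneg : ∀ s a z, 0 ≤ Pz s a z
  Pz_sum_one : ∀ s a, ∑ z, Pz s a z = 1
  R : S → Z → ℝ
  R_nonneg : ∀ s z, 0 ≤ R s z
  R_le_one : ∀ s z, R s z ≤ 1

namespace CMDP

variable {S A Z : Type} [Fintype S] [Fintype A] [Fintype Z]
variable [Nonempty S] [Nonempty A] [Nonempty Z]

/-- Induced reward `R(s,a) = Σ_z R(s,z) P(z|s,a)`. -/
def Rbar (M : CMDP S A Z) (s : S) (a : A) : ℝ := ∑ z, M.R s z * M.Pz s a z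

/-- Induced transition `ℙ(y|s,a) = Σ_z ℙ(y|s,z) P(z|s,a)`. -/
def Pbar (M : CMDP S A Z) (s : S) (a : A) (y : S) : ℝ :=
  ∑ z, M.Ptrans s z y * M.Pz s a z

/-- `polVal M π j s = V^π_{H-j}(s)`: value of policy `π` with `j` steps remaining
(levels are 0-based, level `H` plays the role of the paper's `H+1`, with value `0`). -/
def polVal (M : CMDP S A Z) (π : ℕ → S → A) : ℕ → S → ℝ
  | 0 => fun _ => 0
  | j + 1 => fun s =>
      M.Rbar s (π (M.H - (j + 1)) s)
        + ∑ y, M.Pbar s (π (M.H - (j + 1)) s) y * polVal M π j y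

/-- Value function `V^π_h` of deterministic policy `π` at 0-based level `h ∈ {0,…,H}`. -/
def Vpol (M : CMDP S A Z) (π : ℕ → S → A) (h : ℕ) (s : S) : ℝ :=
  M.polVal π (M.H - h) s

/-- Optimal value function `V^*_h(s) = max_π V^π_h(s)` at 0-based level `h`. -/
def Vstar (M : CMDP S A Z) (h : ℕ) (s : S) : ℝ := ⨆ π : ℕ → S → A, M.Vpol π h s

/-- `q^π_h(s,z) = R(s,z) + Σ_y ℙ(y|s,z) V^π_{h+1}(y)`. -/
def qpol (M : CMDP S A Z) (π : ℕ → S → A) (h : ℕ) (s : S) (z : Z) : ℝ :=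
  M.R s z + ∑ y, M.Ptrans s z y * M.Vpol π (h + 1) y

/-- `q^*_h(s,z) = max_π q^π_h(s,z)`. -/
def qstar (M : CMDP S A Z) (h : ℕ) (s : S) (z : Z) : ℝ :=
  ⨆ π : ℕ → S → A, M.qpol π h s z

/-- Trajectory space for `K` episodes: states `s_{k,0},…,s_{k,H}` and parent values
`z_{k,0},…,z_{k,H-1}` for each episode `k` (0-based within-episode indices). -/
def Traj (M : CMDP S A Z) (K : ℕ) : Type :=
  Fin K → (Fin (M.H + 1) → S) × (Fin M.H → Z)

instance (M : CMDP S A Z) (K : ℕ) : Fintype (M.Traj K) :=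
  inferInstanceAs (Fintype (Fin K → (Fin (M.H + 1) → S) × (Fin M.H → Z)))

/-- State `s_{k,h}`. -/
def st (M : CMDP S A Z) {K : ℕ} (ω : M.Traj K) (k : Fin K) (h : Fin (M.H + 1)) : S :=
  (ω k).1 h

/-- Parent values `z_{k,h}`. -/
def zv (M : CMDP S A Z) {K : ℕ} (ω : M.Traj K) (k : Fin K) (h : Fin M.H) : Z :=
  (ω k).2 h

/-- `N_k(s,z,y)`: number of observed transitions `(s,z) → y` in episodes before `k`. -/
def NkSZY (M : CMDP S A Z) {K : ℕ} (ω : M.Traj K) (k : Fin K) (s : S) (z : Z) (y : S) : ℕ :=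
  ∑ k' : Fin K, ∑ h : Fin M.H,
    if k' < k ∧ M.st ω k' h.castSucc = s ∧ M.zv ω k' h = z ∧ M.st ω k' h.succ = y
    then 1 else 0

/-- `N_k(s,z) = Σ_y N_k(s,z,y)`. -/
def NkSZ (M : CMDP S A Z) {K : ℕ} (ω : M.Traj K) (k : Fin K) (s : S) (z : Z) : ℕ :=
  ∑ y, M.NkSZY ω k s z y

/-- Empirical transition probabilities `P̂_k(y|s,z)`. -/
def Phat (M : CMDP S A Z) {K : ℕ} (ω : M.Traj K) (k : Fin K) (s : S) (z : Z) (y : S) : ℝ :=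
  if 0 < M.NkSZ ω k s z then (M.NkSZY ω k s z y : ℝ) / (M.NkSZ ω k s z : ℝ) else 0

/-- Exploration bonus `b_{k,h}(s,z)` (it does not depend on `h`):
`7HL√(S/N_k(s,z))` if `N_k(s,z) > 0`, and `H√S` otherwise. -/
def bonus (M : CMDP S A Z) {K : ℕ} (L : ℝ) (ω : M.Traj K) (k : Fin K) (s : S) (z : Z) : ℝ :=
  if 0 < M.NkSZ ω k s z then
    7 * (M.H : ℝ) * L * Real.sqrt ((Fintype.card S : ℝ) / (M.NkSZ ω k s z : ℝ))
  else (M.H : ℝ) * Real.sqrt (Fintype.card S)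

/-- One step of optimistic `q`-value computation from the next-level value `Vnext`. -/
def qfun (M : CMDP S A Z) {K : ℕ} (L : ℝ) (ω : M.Traj K) (k : Fin K)
    (Vnext : S → ℝ) (s : S) (z : Z) : ℝ :=
  if 0 < M.NkSZ ω k s z then
    min (M.H : ℝ) (M.R s z + ∑ y, M.Phat ω k s z y * Vnext y + M.bonus L ω k s z)
  else (M.H : ℝ)

/-- Optimistic value function with `j` steps remaining: `Valg M L ω k j = V_{k,H-j}`. -/
def Valg (M : CMDP S A Z) {K : ℕ} (L : ℝ) (ω : M.Traj K) (k : Fin K) : ℕ → S → ℝ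
  | 0 => fun _ => 0
  | j + 1 => fun s =>
      Finset.univ.sup' Finset.univ_nonempty
        (fun a : A => ∑ z, M.Pz s a z * M.qfun L ω k (Valg M L ω k j) s z)

/-- `q_{k,h}(s,z)` at 0-based level `h ∈ {0,…,H-1}`. -/
def qAt (M : CMDP S A Z) {K : ℕ} (L : ℝ) (ω : M.Traj K) (k : Fin K) (h : ℕ)
    (s : S) (z : Z) : ℝ :=
  M.qfun L ω k (M.Valg L ω k (M.H - (h + 1))) s z

/-- `Q_{k,h}(s,a) = Σ_z P(z|s,a) q_{k,h}(s,z)`. -/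
def QAt (M : CMDP S A Z) {K : ℕ} (L : ℝ) (ω : M.Traj K) (k : Fin K) (h : ℕ)
    (s : S) (a : A) : ℝ :=
  ∑ z, M.Pz s a z * M.qAt L ω k h s z

/-- `V_{k,h}(s)` at 0-based level `h ∈ {0,…,H}`. -/
def VAt (M : CMDP S A Z) {K : ℕ} (L : ℝ) (ω : M.Traj K) (k : Fin K) (h : ℕ) (s : S) : ℝ :=
  M.Valg L ω k (M.H - h) s

/-- The greedy policy `π_k(s,h) = argmax_a Q_{k,h}(s,a)` played in episode `k`. -/
def polAlg (M : CMDP S A Z) {K : ℕ} (L : ℝ) (ω : M.Traj K) (k : Fin K) (h : ℕ) (s : S) : A :=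
  (Finset.exists_max_image (Finset.univ : Finset A) (fun a => M.QAt L ω k h s a)
    Finset.univ_nonempty).choose

/-- Probability weight of a trajectory `ω` under the interaction of C-UCBVI with the MDP,
with (arbitrary, adversarially fixed) initial states `init k` in episode `k`:
`z_{k,h} ∼ P(·|s_{k,h}, π_k(s_{k,h},h))` and `s_{k,h+1} ∼ ℙ(·|s_{k,h}, z_{k,h})`. -/
def weight (M : CMDP S A Z) {K : ℕ} (L : ℝ) (init : Fin K → S) (ω : M.Traj K) : ℝ :=
  ∏ k : Fin K,
    ((if M.st ω k 0 = init k then (1 : ℝ) else 0) *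
      ∏ h : Fin M.H,
        M.Pz (M.st ω k h.castSucc) (M.polAlg L ω k h.val (M.st ω k h.castSucc)) (M.zv ω k h)
          * M.Ptrans (M.st ω k h.castSucc) (M.zv ω k h) (M.st ω k h.succ))

/-- Probability of an event `E` over the random interaction of C-UCBVI with the MDP. -/
def Prob (M : CMDP S A Z) {K : ℕ} (L : ℝ) (init : Fin K → S) (E : M.Traj K → Prop) : ℝ :=
  ∑ ω : M.Traj K, if E ω then M.weight L init ω else 0

end CMDP

/-- The logarithmic factor `L = log(5·S·H·K·Z·T/δ)` with `T = K·H`. -/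
def Lparam (Scard H K Zcard : ℕ) (δ : ℝ) : ℝ :=
  Real.log (5 * Scard * H * K * Zcard * (K * H) / δ)

end

/-! The greedy action `a = π_k(s,h)` attains `V_{k,h}(s) = Q_{k,h}(s,a)`, and every optimistic
`q_{k,h}(s,z)` is at most `R(s,z) + P̂_k V_{k,h+1} + b`, so
`V_{k,h}(s) ≤ R(s,a) + P̂^{π_k} V_{k,h+1} + b̄`. Subtracting the Bellman equation
`V^{π_k}_h(s) = R(s,a) + ℙ^{π_k} V^{π_k}_{h+1}` and splitting
`P̂^{π_k} V_{k,h+1} - ℙ^{π_k} V^{π_k}_{h+1}` as `ℙ^{π_k}(V_{k,h+1} - V^{π_k}_{h+1})`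
plus `(P̂^{π_k} - ℙ^{π_k})V^*_{h+1}` plus `(P̂^{π_k} - ℙ^{π_k})(V_{k,h+1} - V^*_{h+1})`
gives the recursion; the `δ̃_{k,h+1}` terms cancel exactly. -/

namespace CMDP

variable {S A Z : Type} [Fintype S] [Fintype A] [Fintype Z]

theorem Vpol_eq_of_lt (M : CMDP S A Z) (π : ℕ → S → A) {h : ℕ} (hh : h < M.H) (s : S) :
    M.Vpol π h s = M.Rbar s (π h s) + ∑ y, M.Pbar s (π h s) y * M.Vpol π (h + 1) y := by
  rw [Vpol, show M.H - h = M.H - (h + 1) + 1 by omega, polVal,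
    show M.H - (M.H - (h + 1) + 1) = h by omega]
  rfl

/-- For an unvisited pair, `q = H ≤ H√S = b` because the state `s` witnesses `S ≥ 1`. -/
theorem qfun_le (M : CMDP S A Z) {K : ℕ} (L : ℝ) (ω : M.Traj K) (k : Fin K)
    (V : S → ℝ) (s : S) (z : Z) :
    M.qfun L ω k V s z ≤ M.R s z + ∑ y, M.Phat ω k s z y * V y + M.bonus L ω k s z := by
  by_cases hN : 0 < M.NkSZ ω k s z
  · simp only [qfun, if_pos hN]
    exact min_le_right _ _
  · have hS : (1 : ℝ) ≤ Real.sqrt (Fintype.card S) :=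
      Real.one_le_sqrt.mpr (by exact_mod_cast Fintype.card_pos_iff.mpr ⟨s⟩)
    have hH : (M.H : ℝ) ≤ M.H * Real.sqrt (Fintype.card S) :=
      le_mul_of_one_le_right (Nat.cast_nonneg _) hS
    simp only [qfun, Phat, bonus, if_neg hN, zero_mul, Finset.sum_const_zero, add_zero]
    linarith [M.R_nonneg s z]

variable [Nonempty A]

theorem VAt_eq_QAt_polAlg (M : CMDP S A Z) {K : ℕ} (L : ℝ) (ω : M.Traj K)
    (k : Fin K) {h : ℕ} (hh : h < M.H) (s : S) :
    M.VAt L ω k h s = M.QAt L ω k h s (M.polAlg L ω k h s) := by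
  have hmax := (Finset.exists_max_image (Finset.univ : Finset A)
    (fun a => M.QAt L ω k h s a) Finset.univ_nonempty).choose_spec.2
  rw [VAt, show M.H - h = M.H - (h + 1) + 1 by omega, Valg]
  exact le_antisymm (Finset.sup'_le _ _ fun a _ => hmax a (Finset.mem_univ a))
    (Finset.le_sup' (fun a => M.QAt L ω k h s a) (Finset.mem_univ _))

theorem QAt_le (M : CMDP S A Z) {K : ℕ} (L : ℝ) (ω : M.Traj K) (k : Fin K) (h : ℕ)
    (s : S) (a : A) :
    M.QAt L ω k h s a ≤ M.Rbar s a
      + ∑ y, (∑ z, M.Phat ω k s z y * M.Pz s a z) * M.VAt L ω k (h + 1) y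
      + ∑ z, M.bonus L ω k s z * M.Pz s a z :=
  calc M.QAt L ω k h s a
      ≤ ∑ z, M.Pz s a z * (M.R s z + ∑ y, M.Phat ω k s z y * M.VAt L ω k (h + 1) y
          + M.bonus L ω k s z) :=
        Finset.sum_le_sum fun z _ =>
          mul_le_mul_of_nonneg_left (M.qfun_le L ω k _ s z) (M.Pz_nonneg s a z)
    _ = _ := by
        simp only [Rbar, mul_add, Finset.sum_add_distrib, Finset.mul_sum, Finset.sum_mul]
        rw [Finset.sum_comm]
        simp only [mul_comm, mul_left_comm, mul_assoc]

end CMDP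

theorem cucbvi_pathwise_recursion_general
    (S A Z : Type) [Fintype S] [Fintype A] [Fintype Z]
    [Nonempty A]
    (M : CMDP S A Z) (K : ℕ) (L : ℝ)
    (ω : M.Traj K) (k : Fin K) (h : Fin M.H) :
    M.VAt L ω k h.val (M.st ω k h.castSucc)
        - M.Vpol (fun h' s => M.polAlg L ω k h' s) h.val (M.st ω k h.castSucc)
      ≤ (M.VAt L ω k (h.val + 1) (M.st ω k h.succ)
            - M.Vpol (fun h' s => M.polAlg L ω k h' s) (h.val + 1) (M.st ω k h.succ))
        + ((∑ y, M.Pbar (M.st ω k h.castSucc)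
                (M.polAlg L ω k h.val (M.st ω k h.castSucc)) y
              * (M.VAt L ω k (h.val + 1) y
                  - M.Vpol (fun h' s => M.polAlg L ω k h' s) (h.val + 1) y))
            - (M.VAt L ω k (h.val + 1) (M.st ω k h.succ)
                - M.Vpol (fun h' s => M.polAlg L ω k h' s) (h.val + 1) (M.st ω k h.succ)))
        + (∑ z, M.bonus L ω k (M.st ω k h.castSucc) z
            * M.Pz (M.st ω k h.castSucc)
                (M.polAlg L ω k h.val (M.st ω k h.castSucc)) z)
        + (∑ y, ((∑ z, M.Phat ω k (M.st ω k h.castSucc) z y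
                  * M.Pz (M.st ω k h.castSucc)
                      (M.polAlg L ω k h.val (M.st ω k h.castSucc)) z)
                - M.Pbar (M.st ω k h.castSucc)
                    (M.polAlg L ω k h.val (M.st ω k h.castSucc)) y)
              * M.Vstar (h.val + 1) y)
        + (∑ y, ((∑ z, M.Phat ω k (M.st ω k h.castSucc) z y
                  * M.Pz (M.st ω k h.castSucc)
                      (M.polAlg L ω k h.val (M.st ω k h.castSucc)) z)
                - M.Pbar (M.st ω k h.castSucc)
                    (M.polAlg L ω k h.val (M.st ω k h.castSucc)) y)
              * (M.VAt L ω k (h.val + 1) y - M.Vstar (h.val + 1) y)) := by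
  set s := M.st ω k h.castSucc
  set a := M.polAlg L ω k h.val s
  have hoptimism := (M.VAt_eq_QAt_polAlg L ω k h.isLt s).trans_le (M.QAt_le L ω k h.val s a)
  have hbellman := M.Vpol_eq_of_lt (fun h' s => M.polAlg L ω k h' s) h.isLt s
  simp only [mul_sub, sub_mul, Finset.sum_sub_distrib]
  linarith

/-- **Pathwise regret recursion for C-UCBVI.** For every realization `ω` of the interaction,
every episode `k` and step `h`:
`δ̃_{k,h} ≤ δ̃_{k,h+1} + ε_{k,h} + b̄_{k,h} + [(P̂^{π_k}-ℙ^{π_k})V^*_{h+1}](s_{k,h})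
  + [(P̂^{π_k}-ℙ^{π_k})(V_{k,h+1}-V^*_{h+1})](s_{k,h})`,
where `δ̃_{k,h} = V_{k,h}(s_{k,h}) - V^{π_k}_h(s_{k,h})` (and `δ̃` at level `H` is `0`). -/
theorem cucbvi_pathwise_recursion
    (S A Z : Type) [Fintype S] [Fintype A] [Fintype Z]
    [Nonempty S] [Nonempty A] [Nonempty Z]
    (M : CMDP S A Z) (K : ℕ) (δ L : ℝ)
    (hδ : δ ∈ Set.Ioo (0 : ℝ) 1)
    (hL : L = Lparam (Fintype.card S) M.H K (Fintype.card Z) δ)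
    (ω : M.Traj K) (k : Fin K) (h : Fin M.H) :
    M.VAt L ω k h.val (M.st ω k h.castSucc)
        - M.Vpol (fun h' s => M.polAlg L ω k h' s) h.val (M.st ω k h.castSucc)
      ≤ (M.VAt L ω k (h.val + 1) (M.st ω k h.succ)
            - M.Vpol (fun h' s => M.polAlg L ω k h' s) (h.val + 1) (M.st ω k h.succ))
        + ((∑ y, M.Pbar (M.st ω k h.castSucc)
                (M.polAlg L ω k h.val (M.st ω k h.castSucc)) y
              * (M.VAt L ω k (h.val + 1) y
                  - M.Vpol (fun h' s => M.polAlg L ω k h' s) (h.val + 1) y))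
            - (M.VAt L ω k (h.val + 1) (M.st ω k h.succ)
                - M.Vpol (fun h' s => M.polAlg L ω k h' s) (h.val + 1) (M.st ω k h.succ)))
        + (∑ z, M.bonus L ω k (M.st ω k h.castSucc) z
            * M.Pz (M.st ω k h.castSucc)
                (M.polAlg L ω k h.val (M.st ω k h.castSucc)) z)
        + (∑ y, ((∑ z, M.Phat ω k (M.st ω k h.castSucc) z y
                  * M.Pz (M.st ω k h.castSucc)
                      (M.polAlg L ω k h.val (M.st ω k h.castSucc)) z)
                - M.Pbar (M.st ω k h.castSucc)
                    (M.polAlg L ω k h.val (M.st ω k h.castSucc)) y)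
              * M.Vstar (h.val + 1) y)
        + (∑ y, ((∑ z, M.Phat ω k (M.st ω k h.castSucc) z y
                  * M.Pz (M.st ω k h.castSucc)
                      (M.polAlg L ω k h.val (M.st ω k h.castSucc)) z)
                - M.Pbar (M.st ω k h.castSucc)
                    (M.polAlg L ω k h.val (M.st ω k h.castSucc)) y)
              * (M.VAt L ω k (h.val + 1) y - M.Vstar (h.val + 1) y)) :=
  cucbvi_pathwise_recursion_general S A Z M K L ω k h
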